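/- The independence model induced by a chain graph satisfies intersection: if X ⫫_G Y | (Z ∪ W) and X ⫫_G W | (Z ∪ Y), then X ⫫_G (Y ∪ W) | Z, for disjoint sets X, Y, Z, W. -/
import Mathlib


/-- A hybrid graph over a vertex set `V`: it has directed edges (`dir`) and
undirected edges (`undir`, stored as a symmetric irreflexive relation). -/
structure HybridGraph (V : Type) where
  dir : V → V → Prop
  undir : V → V → Prop
  dir_irrefl : ∀ x, ¬ dir x x
  undir_irrefl : ∀ x, ¬ undir x x
  undir_symm : ∀ x y, undir x y → undir y x

namespace HybridGraph

variable {V : Type}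

/-- Two nodes are adjacent if joined by a directed or undirected edge. -/
def adj (G : HybridGraph V) (x y : V) : Prop :=
  G.dir x y ∨ G.dir y x ∨ G.undir x y

/-- One step of a descending route: `x − y` or `x → y`. -/
def descStep (G : HybridGraph V) (x y : V) : Prop := G.dir x y ∨ G.undir x y

/-- `y` is a descendant of `x`: there is a descending route from `x` to `y`
(routes of length zero allowed). -/
def descendant (G : HybridGraph V) : V → V → Prop :=
  Relation.ReflTransGen G.descStep

/-- There is an undirected route between `x` and `y` (length zero allowed). -/
def uconn (G : HybridGraph V) : V → V → Prop :=
  Relation.ReflTransGen G.undir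

/-- A chain is modeled by a function `f : V → ℕ` assigning each node the index of
its block.  `G` is consistent with the chain `f` if directed edges go strictly
left-to-right and undirected edges stay within a block. -/
def ConsistentWith (G : HybridGraph V) (f : V → ℕ) : Prop :=
  (∀ x y, G.dir x y → f x < f y) ∧ (∀ x y, G.undir x y → f x = f y)

/-- A chain graph is a hybrid graph consistent with some chain. -/
def IsChainGraph (G : HybridGraph V) : Prop := ∃ f : V → ℕ, G.ConsistentWith f

/-- The component (maximal undirected-connected set) containing `x`. -/
def component (G : HybridGraph V) (x : V) : Set V := {y | G.uconn x y}

def IsComponent (G : HybridGraph V) (C : Set V) : Prop := ∃ x, C = G.component x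

/-- The descendants of a set of nodes. -/
def descendantsOf (G : HybridGraph V) (S : Set V) : Set V :=
  {y | ∃ x ∈ S, G.descendant x y}

/-- A component is terminal if its set of descendants is exactly itself. -/
def IsTerminal (G : HybridGraph V) (C : Set V) : Prop := G.descendantsOf C = C

/-- Parents of a set of nodes. -/
def Pa (G : HybridGraph V) (S : Set V) : Set V := {x | ∃ y ∈ S, G.dir x y}

/-- Neighbors of a set of nodes. -/
def nbr (G : HybridGraph V) (S : Set V) : Set V := {x | ∃ y ∈ S, G.undir x y}

/-- Boundary of a node: parents together with neighbors. -/
def Bd (G : HybridGraph V) (x : V) : Set V := {y | G.dir y x ∨ G.undir y x}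

inductive EdgeKind | fwd | bwd | und
deriving DecidableEq

/-- A route in `G` of length `n`: nodes `φ 0, …, φ n`, where the `i`-th edge is
directed forwards, directed backwards, or undirected according to `kind i`. -/
structure Route (G : HybridGraph V) where
  n : ℕ
  φ : ℕ → V
  kind : ℕ → EdgeKind
  valid : ∀ i < n,
    (kind i = EdgeKind.fwd → G.dir (φ i) (φ (i+1))) ∧
    (kind i = EdgeKind.bwd → G.dir (φ (i+1)) (φ i)) ∧
    (kind i = EdgeKind.und → G.undir (φ i) (φ (i+1)))

namespace Route

variable {G : HybridGraph V}

/-- Positions `a ≤ k ≤ b` form a collider section of the route: a maximal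
undirected subroute entered by an arrowhead on both sides. -/
def ColliderSec (ρ : Route G) (a b : ℕ) : Prop :=
  a ≤ b ∧ b < ρ.n ∧ 0 < a ∧
  (∀ i, a ≤ i → i < b → ρ.kind i = EdgeKind.und) ∧
  ρ.kind (a-1) = EdgeKind.fwd ∧ ρ.kind b = EdgeKind.bwd

/-- Position `k` lies in a collider section of the route. -/
def ColliderPos (ρ : Route G) (k : ℕ) : Prop :=
  ∃ a b, a ≤ k ∧ k ≤ b ∧ ρ.ColliderSec a b

/-- A route is `Z`-active when every collider section has a node in `Z` and every
non-collider section has no node in `Z`. -/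
def ZActive (ρ : Route G) (Z : Set V) : Prop :=
  (∀ a b, ρ.ColliderSec a b → ∃ k, a ≤ k ∧ k ≤ b ∧ ρ.φ k ∈ Z) ∧
  (∀ k, k ≤ ρ.n → ¬ ρ.ColliderPos k → ρ.φ k ∉ Z)

end Route

/-- Separation `X ⫫_G Y | Z`: no `Z`-active route between a node of `X` and a
node of `Y`. -/
def Sep (G : HybridGraph V) (X Y Z : Set V) : Prop :=
  ¬ ∃ ρ : Route G, ρ.φ 0 ∈ X ∧ ρ.φ ρ.n ∈ Y ∧ ρ.ZActive Z

/-- `I(H) ⊆ I(G)`: every separation statement of `H` is one of `G`. -/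
def ModelLe (H G : HybridGraph V) : Prop :=
  ∀ X Y Z : Set V, Disjoint X Y → Disjoint X Z → Disjoint Y Z →
    H.Sep X Y Z → G.Sep X Y Z

/-- Result of splitting the component `C` into `C \ L` and `L`: every undirected
edge from `C \ L` to `L` becomes directed towards `L`. -/
def splitGraph (G : HybridGraph V) (C L : Set V) : HybridGraph V where
  dir x y := G.dir x y ∨ (x ∈ C \ L ∧ y ∈ L ∧ G.undir x y)
  undir x y := G.undir x y ∧ ¬((x ∈ C \ L ∧ y ∈ L) ∨ (y ∈ C \ L ∧ x ∈ L))
  dir_irrefl := by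
    intro x h
    rcases h with h | ⟨hx, hy, _⟩
    · exact G.dir_irrefl x h
    · exact hx.2 hy
  undir_irrefl := fun x h => G.undir_irrefl x h.1
  undir_symm := by
    intro x y h
    exact ⟨G.undir_symm x y h.1, fun hc => h.2 (Or.symm hc)⟩

/-- `H` is obtained from `G` by a feasible split of a component `C` into the two
nonempty connected parts `C \ L` and `L`. -/
def IsFeasibleSplit (G H : HybridGraph V) : Prop :=
  ∃ C L : Set V, G.IsComponent C ∧ L ⊆ C ∧ L.Nonempty ∧ (C \ L).Nonempty ∧
    (∀ x ∈ L, ∀ y ∈ L, G.uconn x y) ∧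
    (∀ x ∈ C \ L, ∀ y ∈ C \ L, G.uconn x y) ∧
    (∀ x ∈ G.nbr L ∩ (C \ L), ∀ y ∈ G.nbr L ∩ (C \ L), x ≠ y → G.undir x y) ∧
    (∀ x ∈ G.Pa L, ∀ y ∈ G.nbr L ∩ (C \ L), G.dir x y) ∧
    H = G.splitGraph C L

/-- Result of merging the components `L` and `R`: every directed edge from `L`
to `R` becomes undirected. -/
def mergeGraph (G : HybridGraph V) (L R : Set V) : HybridGraph V where
  dir x y := G.dir x y ∧ ¬(x ∈ L ∧ y ∈ R)
  undir x y := G.undir x y ∨ (x ∈ L ∧ y ∈ R ∧ G.dir x y) ∨ (y ∈ L ∧ x ∈ R ∧ G.dir y x)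
  dir_irrefl := fun x h => G.dir_irrefl x h.1
  undir_irrefl := by
    intro x h
    rcases h with h | ⟨_, _, h⟩ | ⟨_, _, h⟩
    · exact G.undir_irrefl x h
    · exact G.dir_irrefl x h
    · exact G.dir_irrefl x h
  undir_symm := by
    intro x y h
    rcases h with h | h | h
    · exact Or.inl (G.undir_symm x y h)
    · exact Or.inr (Or.inr h)
    · exact Or.inr (Or.inl h)

/-- `H` is obtained from `G` by a feasible merging of two components `L`, `R`. -/
def IsFeasibleMerge (G H : HybridGraph V) : Prop :=
  ∃ L R : Set V, G.IsComponent L ∧ G.IsComponent R ∧ L ≠ R ∧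
    (G.Pa R ∩ L).Nonempty ∧
    (∀ x ∈ G.Pa R ∩ L, ∀ y ∈ G.Pa R ∩ L, x ≠ y → G.undir x y) ∧
    (∀ x ∈ G.Pa R \ L, ∀ y ∈ G.Pa R ∩ L, G.dir x y) ∧
    H = G.mergeGraph L R

/-- `H` is obtained from `G` by adding a single (previously absent) directed or
undirected edge between two distinct nodes. -/
def IsEdgeAddition (G H : HybridGraph V) : Prop :=
  ∃ a b : V, a ≠ b ∧
    ((¬ G.dir a b ∧ (H.dir = fun x y => G.dir x y ∨ (x = a ∧ y = b)) ∧
        H.undir = G.undir) ∨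
     (¬ G.undir a b ∧ H.dir = G.dir ∧
        (H.undir = fun x y => G.undir x y ∨ (x = a ∧ y = b) ∨ (x = b ∧ y = a))))

/-- `H` is obtained from `G` by removing a single directed or undirected edge. -/
def IsEdgeRemoval (G H : HybridGraph V) : Prop :=
  ∃ a b : V,
    (G.dir a b ∧ (H.dir = fun x y => G.dir x y ∧ ¬(x = a ∧ y = b)) ∧
       H.undir = G.undir) ∨
    (G.undir a b ∧ H.dir = G.dir ∧
       (H.undir = fun x y => G.undir x y ∧ ¬((x = a ∧ y = b) ∨ (x = b ∧ y = a))))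

end HybridGraph

open HybridGraph

variable {V : Type}

/-- `X`, `Y`, `Z`, `W` are pairwise disjoint. -/
def PairwiseDisj (X Y Z W : Set V) : Prop :=
  Disjoint X Y ∧ Disjoint X Z ∧ Disjoint X W ∧
  Disjoint Y Z ∧ Disjoint Y W ∧ Disjoint Z W

/-- A graphoid: an independence model closed under symmetry, decomposition,
weak union, contraction and intersection (for pairwise disjoint arguments). -/
structure Graphoid (V : Type) where
  ind : Set V → Set V → Set V → Prop
  symm : ∀ X Y Z : Set V, Disjoint X Y → Disjoint X Z → Disjoint Y Z →
    ind X Y Z → ind Y X Z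
  decomp : ∀ X Y W Z : Set V, PairwiseDisj X Y Z W → ind X (Y ∪ W) Z → ind X Y Z
  weakUnion : ∀ X Y W Z : Set V, PairwiseDisj X Y Z W → ind X (Y ∪ W) Z →
    ind X Y (Z ∪ W)
  contraction : ∀ X Y W Z : Set V, PairwiseDisj X Y Z W → ind X Y (Z ∪ W) →
    ind X W Z → ind X (Y ∪ W) Z
  inter : ∀ X Y W Z : Set V, PairwiseDisj X Y Z W → ind X Y (Z ∪ W) →
    ind X W (Z ∪ Y) → ind X (Y ∪ W) Z

/-- `G` is an independence map of the model `M`: `I(G) ⊆ M`. -/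
def IsIMap (G : HybridGraph V) (M : Set V → Set V → Set V → Prop) : Prop :=
  ∀ X Y Z : Set V, Disjoint X Y → Disjoint X Z → Disjoint Y Z →
    G.Sep X Y Z → M X Y Z

/-- `Gα` is a minimal independence map of `M` relative to the chain `f`. -/
def IsMinIMapRel (M : Set V → Set V → Set V → Prop) (f : V → ℕ)
    (Gα : HybridGraph V) : Prop :=
  Gα.ConsistentWith f ∧ IsIMap Gα M ∧
    ∀ H : HybridGraph V, IsEdgeRemoval Gα H → ¬ IsIMap H M

/-- the independence model of a chain graph satisfies
intersection. -/
theorem sep_intersection [Fintype V] (G : HybridGraph V) (hG : G.IsChainGraph)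
    (X Y Z W : Set V) (hd : PairwiseDisj X Y Z W)
    (h1 : G.Sep X Y (Z ∪ W)) (h2 : G.Sep X W (Z ∪ Y)) :
    G.Sep X (Y ∪ W) Z := by
  classical
  rintro ⟨ρ, hX, hYW, hactC, hactN⟩
  have hn_nc : ¬ ρ.ColliderPos ρ.n := by
    rintro ⟨a, b, hak, hkb, hab, hbn, _⟩
    omega
  have hex : ∃ k, k ≤ ρ.n ∧ ¬ ρ.ColliderPos k ∧ ρ.φ k ∈ Y ∪ W :=
    ⟨ρ.n, le_refl _, hn_nc, hYW⟩
  obtain ⟨hk_le, hk_nc, hk_mem⟩ := Nat.find_spec hex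
  set k := Nat.find hex with hk_def
  have hk_min : ∀ j, j < k → ¬(j ≤ ρ.n ∧ ¬ ρ.ColliderPos j ∧ ρ.φ j ∈ Y ∪ W) :=
    fun j hj => Nat.find_min hex hj
  let ρ' : Route G :=
    ⟨k, ρ.φ, ρ.kind, fun i hi => ρ.valid i (lt_of_lt_of_le hi hk_le)⟩
  have hsec : ∀ a b, ρ'.ColliderSec a b → ρ.ColliderSec a b := by
    rintro a b ⟨hab, hbk, ha0, hund, hfwd, hbwd⟩
    exact ⟨hab, lt_of_lt_of_le hbk hk_le, ha0, hund, hfwd, hbwd⟩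
  have hpos : ∀ j, j ≤ k → ρ.ColliderPos j → ρ'.ColliderPos j := by
    rintro j hjk ⟨a, b, haj, hjb, hab, hbn, ha0, hund, hfwd, hbwd⟩
    have hbk : b < k := by
      by_contra hbk
      exact hk_nc ⟨a, b, by omega, by omega, hab, hbn, ha0, hund, hfwd, hbwd⟩
    exact ⟨a, b, haj, hjb, hab, hbk, ha0, hund, hfwd, hbwd⟩
  have key : ∀ j, j ≤ k → ¬ ρ'.ColliderPos j →
      ρ.φ j ∉ Z ∧ (ρ.φ j ∈ Y ∪ W → j = k) := by
    intro j hjk hj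
    have hjρ : ¬ ρ.ColliderPos j := fun h => hj (hpos j hjk h)
    refine ⟨hactN j (le_trans hjk hk_le) hjρ, fun hmem => ?_⟩
    by_contra hne
    exact hk_min j (lt_of_le_of_ne hjk hne) ⟨le_trans hjk hk_le, hjρ, hmem⟩
  rcases hk_mem with hY | hW
  · refine h1 ⟨ρ', hX, hY, ?_, ?_⟩
    · intro a b hs
      obtain ⟨m, hm1, hm2, hmZ⟩ := hactC a b (hsec a b hs)
      exact ⟨m, hm1, hm2, Or.inl hmZ⟩
    · intro j hjk hj
      obtain ⟨hZ, hmemk⟩ := key j hjk hj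
      rintro (hz | hw)
      · exact hZ hz
      · have hjk' : j = k := hmemk (Or.inr hw)
        rw [hjk'] at hw
        exact Set.disjoint_left.mp hd.2.2.2.2.1 hY hw
  · refine h2 ⟨ρ', hX, hW, ?_, ?_⟩
    · intro a b hs
      obtain ⟨m, hm1, hm2, hmZ⟩ := hactC a b (hsec a b hs)
      exact ⟨m, hm1, hm2, Or.inl hmZ⟩
    · intro j hjk hj
      obtain ⟨hZ, hmemk⟩ := key j hjk hj
      rintro (hz | hy)
      · exact hZ hz
      · have hjk' : j = k := hmemk (Or.inl hy)
        rw [hjk'] at hy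
        exact Set.disjoint_left.mp hd.2.2.2.2.1 hy hW
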